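/- arXiv:0705.0754 — 3 statements merged into one kernel-verified Lean document; each statement's English description precedes it below -/
import Mathlib

section
/- Let G = G₁ ∗_A G₂ be an amalgam of finite groups, let H be a finitely generated subgroup of G, and let (Γ(H), v₀) be the normal core of Cayley(G, H). Then a word g in normal form belongs to H if and only if g labels a path in Γ(H) closed at the basepoint v₀. -/
open Monoid

/-- A graph labelled with `X^±`: each edge carries a letter of `X` together with a
sign (`true` for a positive letter `x`, `false` for `x⁻¹`), and there is a
fixed-point-free involution `bar` reversing edges and inverting labels. -/
structure LabeledGraph (X : Type) : Type 1 where
  V : Type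
  E : Type
  bar : E → E
  ini : E → V
  lab : E → X × Bool
  bar_bar : ∀ e, bar (bar e) = e
  bar_ne : ∀ e, bar e ≠ e
  lab_bar : ∀ e, lab (bar e) = ((lab e).1, !(lab e).2)

namespace LabeledGraph

variable {X : Type} (Γ : LabeledGraph X)

/-- the terminal vertex of an edge -/
def ter (e : Γ.E) : Γ.V := Γ.ini (Γ.bar e)

/-- `Γ.IsPathFrom v w l` : the list of edges `l` forms a path from `v` to `w` in `Γ`. -/
def IsPathFrom : Γ.V → Γ.V → List Γ.E → Prop
  | v, w, [] => v = w
  | v, w, e :: l => Γ.ini e = v ∧ IsPathFrom (Γ.ter e) w l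

/-- a graph is well-labelled if edges with the same initial vertex and the same label coincide -/
def WellLabeled : Prop :=
  ∀ e₁ e₂ : Γ.E, Γ.ini e₁ = Γ.ini e₂ → Γ.lab e₁ = Γ.lab e₂ → e₁ = e₂

def Connected : Prop := ∀ v w : Γ.V, ∃ l, Γ.IsPathFrom v w l

/-- the word over `X^±` read along a list of edges -/
def word (l : List Γ.E) : List (X × Bool) := l.map Γ.lab

/-- a path (list of edges) passes through a vertex -/
def PassesThrough (l : List Γ.E) (v : Γ.V) : Prop :=
  ∃ e ∈ l, Γ.ini e = v ∨ Γ.ter e = v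

/-- the list of vertices visited by a path starting at `v` -/
def pathVertices (v : Γ.V) (l : List Γ.E) : List Γ.V := v :: l.map Γ.ter

/-- `v` is within graph distance `n` of `u` -/
def DistLe (n : ℕ) (u v : Γ.V) : Prop := ∃ l, Γ.IsPathFrom u v l ∧ l.length ≤ n

/-- a list of edges is freely reduced -/
def FreelyReduced (l : List Γ.E) : Prop := l.Chain' (fun e e' => e' ≠ Γ.bar e)

end LabeledGraph

/-- evaluation in a group `G` of a word over `X^±`, via a map `g : X → G` -/
def wordVal {X G : Type} [Group G] (g : X → G) (w : List (X × Bool)) : G :=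
  (w.map fun p => if p.2 then g p.1 else (g p.1)⁻¹).prod

namespace LabeledGraph

variable {X G : Type} [Group G] (g : X → G) (Γ : LabeledGraph X)

/-- the value in `G` of (the label of) a path -/
def pathVal (l : List Γ.E) : G := wordVal g (Γ.word l)

/-- `Lab(Γ, v₀)` : the set of values of labels of closed paths at `v₀` -/
def LabSet (v₀ : Γ.V) : Set G :=
  {x | ∃ l, Γ.IsPathFrom v₀ v₀ l ∧ Γ.pathVal g l = x}

/-- a graph is `G`-based if every path whose label is trivial in `G` is closed -/
def IsGBased : Prop :=
  ∀ v w l, Γ.IsPathFrom v w l → Γ.pathVal g l = 1 → v = w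

end LabeledGraph

/-- a morphism of labelled graphs -/
structure GraphHom {X : Type} (Γ Δ : LabeledGraph X) where
  fV : Γ.V → Δ.V
  fE : Γ.E → Δ.E
  map_ini : ∀ e, Δ.ini (fE e) = fV (Γ.ini e)
  map_bar : ∀ e, Δ.bar (fE e) = fE (Γ.bar e)
  map_lab : ∀ e, Δ.lab (fE e) = Γ.lab e

/-- the image of a morphism of labelled graphs, as a labelled graph -/
def GraphHom.image {X : Type} {Γ Δ : LabeledGraph X} (ψ : GraphHom Γ Δ) :
    LabeledGraph X where
  V := Set.range ψ.fV
  E := Set.range ψ.fE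
  bar e := ⟨Δ.bar e.1, by
    obtain ⟨a, ha⟩ := e.2
    exact ⟨Γ.bar a, by rw [← ψ.map_bar, ha]⟩⟩
  ini e := ⟨Δ.ini e.1, by
    obtain ⟨a, ha⟩ := e.2
    exact ⟨Γ.ini a, by rw [← ψ.map_ini, ha]⟩⟩
  lab e := Δ.lab e.1
  bar_bar e := Subtype.ext (Δ.bar_bar e.1)
  bar_ne e h := Δ.bar_ne e.1 (congrArg Subtype.val h)
  lab_bar e := Δ.lab_bar e.1

/-- an isomorphism of pointed labelled graphs exists -/
def IsPointedIso {X : Type} (Γ Δ : LabeledGraph X) (v₀ : Γ.V) (w₀ : Δ.V) : Prop :=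
  ∃ ψ : GraphHom Γ Δ, Function.Bijective ψ.fV ∧ Function.Bijective ψ.fE ∧ ψ.fV v₀ = w₀

/-- right multiplication by `g` on the set of right cosets of `H` -/
def cosMul {G : Type} [Group G] (H : Subgroup G) (g : G) :
    Quotient (QuotientGroup.rightRel H) → Quotient (QuotientGroup.rightRel H) :=
  Quotient.map (· * g) <| by
    intro a b hab
    have hab' := (QuotientGroup.rightRel_apply).1 hab
    exact (QuotientGroup.rightRel_apply).2 (by simpa [mul_inv_rev, mul_assoc] using hab')

/-- the relative Cayley graph of `G` with respect to a subgroup `H`, with edges labelled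
by letters from `Y` embedded into an alphabet `X` and evaluated in `G` via `val`. -/
def relCayley {G : Type} [Group G] (H : Subgroup G) {Y X : Type}
    (emb : Y → X) (val : Y → G) : LabeledGraph X where
  V := Quotient (QuotientGroup.rightRel H)
  E := Quotient (QuotientGroup.rightRel H) × (Y × Bool)
  bar e := (cosMul H (if e.2.2 then val e.2.1 else (val e.2.1)⁻¹) e.1, (e.2.1, !e.2.2))
  ini e := e.1
  lab e := (emb e.2.1, e.2.2)
  bar_bar := by
    rintro ⟨v, y, b⟩
    induction v using Quotient.inductionOn with
    | h a => cases b <;> simp [cosMul, mul_assoc]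
  bar_ne := by
    rintro ⟨v, y, b⟩ h
    have := congrArg (fun e => e.2.2) h
    simp at this
  lab_bar := by rintro ⟨v, y, b⟩; rfl
/-- `(Γ', v₀')` is obtained from `(Γ, v₀)` by a single Stallings folding: the
identification of a pair of distinct edges with the same initial vertex and the
same label. -/
def IsFoldingOf {X : Type} (Γ Γ' : LabeledGraph X) (v₀ : Γ.V) (v₀' : Γ'.V) : Prop :=
  ∃ (π : GraphHom Γ Γ') (e₁ e₂ : Γ.E),
    e₁ ≠ e₂ ∧ Γ.ini e₁ = Γ.ini e₂ ∧ Γ.lab e₁ = Γ.lab e₂ ∧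
    Function.Surjective π.fV ∧ Function.Surjective π.fE ∧
    π.fV v₀ = v₀' ∧ π.fE e₁ = π.fE e₂ ∧ π.fV (Γ.ter e₁) = π.fV (Γ.ter e₂) ∧
    (∀ a b : Γ.E, π.fE a = π.fE b →
      a = b ∨ ({a, b} : Set Γ.E) = {e₁, e₂} ∨ ({a, b} : Set Γ.E) = {Γ.bar e₁, Γ.bar e₂}) ∧
    (∀ u v : Γ.V, π.fV u = π.fV v → u = v ∨ ({u, v} : Set Γ.V) = {Γ.ter e₁, Γ.ter e₂})

/-- `(Γ', v₀')` is obtained from `(Γ, v₀)` by cutting a single hair: the removal of an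
edge (pair) whose terminal vertex has degree one. -/
def IsHairCutOf {X : Type} (Γ Γ' : LabeledGraph X) (v₀ : Γ.V) (v₀' : Γ'.V) : Prop :=
  ∃ (π : GraphHom Γ' Γ) (e : Γ.E),
    (∀ e' : Γ.E, Γ.ini e' = Γ.ter e → e' = Γ.bar e) ∧
    Function.Injective π.fV ∧ Function.Injective π.fE ∧
    Set.range π.fV = {v | v ≠ Γ.ter e} ∧
    Set.range π.fE = {f | f ≠ e ∧ f ≠ Γ.bar e} ∧
    π.fV v₀' = v₀

/-- `(Γ', v₀')` is obtained from `(Γ, v₀)` by identifying the two distinct vertices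
`v₁` and `v₂` into a single vertex (the edge sets being in natural bijection). -/
def IsEndpointIdentification {X : Type} (Γ Γ' : LabeledGraph X) (v₁ v₂ : Γ.V)
    (v₀ : Γ.V) (v₀' : Γ'.V) : Prop :=
  ∃ π : GraphHom Γ Γ', Function.Surjective π.fV ∧ Function.Bijective π.fE ∧
    π.fV v₀ = v₀' ∧ π.fV v₁ = π.fV v₂ ∧
    ∀ u v : Γ.V, π.fV u = π.fV v → u = v ∨ ({u, v} : Set Γ.V) = {v₁, v₂}
namespace Amalgam

variable {X : Fin 2 → Type} {Gi : Fin 2 → Type} [∀ i, Group (Gi i)]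
  {A : Type} [Group A] (φ : ∀ i, A →* Gi i) (gen : ∀ i, X i → Gi i)

/-- the combined alphabet `X = X₁ ⊔ X₂` (disjoint by construction) -/
abbrev Alpha (X : Fin 2 → Type) : Type := (i : Fin 2) × X i

/-- evaluation of the letters in the amalgam `G = G₁ ∗_A G₂` -/
def genG : Alpha X → PushoutI φ := fun a => PushoutI.of (φ := φ) a.1 (gen a.1 a.2)

/-- the image of the amalgamated subgroup `A` in `G` -/
def Asub : Subgroup (PushoutI φ) := (PushoutI.base φ).range

variable (Γ : LabeledGraph (Alpha X))

/-- the color (`1` or `2`) of an edge -/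
def colorE (e : Γ.E) : Fin 2 := (Γ.lab e).1.1

/-- one step between vertices along an edge of color `i` -/
def MonoStep (i : Fin 2) (u v : Γ.V) : Prop :=
  ∃ e : Γ.E, colorE Γ e = i ∧ Γ.ini e = u ∧ Γ.ter e = v

/-- reachability by paths of color `i` -/
def monoReach (i : Fin 2) : Γ.V → Γ.V → Prop := Relation.ReflTransGen (MonoStep Γ i)

/-- the monochromatic component of an edge: all edges of the same color whose initial
vertex is monochromatically reachable from that of `e₀` -/
def monoComponent (e₀ : Γ.E) : Set Γ.E :=
  {e | colorE Γ e = colorE Γ e₀ ∧ monoReach Γ (colorE Γ e₀) (Γ.ini e₀) (Γ.ini e)}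

/-- `C` is an `X_i`-monochromatic component of `Γ` -/
def IsMonoComponent (i : Fin 2) (C : Set Γ.E) : Prop :=
  ∃ e₀, colorE Γ e₀ = i ∧ C = monoComponent Γ e₀

/-- the vertex set of a set of edges -/
def VSet (C : Set Γ.E) : Set Γ.V := {v | ∃ e ∈ C, Γ.ini e = v}

/-- a vertex is bichromatic if edges of both colors begin at it -/
def Bichromatic (v : Γ.V) : Prop :=
  (∃ e, Γ.ini e = v ∧ colorE Γ e = 0) ∧ (∃ e, Γ.ini e = v ∧ colorE Γ e = 1)

/-- the bichromatic vertices of a component -/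
def VB (C : Set Γ.E) : Set Γ.V := {v ∈ VSet Γ C | Bichromatic Γ v}

/-- `Lab(C, u)` : values of labels of closed paths at `u` inside the edge set `C` -/
def LabSetIn (C : Set Γ.E) (u : Γ.V) : Set (PushoutI φ) :=
  {x | ∃ l, (∀ e ∈ l, e ∈ C) ∧ Γ.IsPathFrom u u l ∧ Γ.pathVal (genG φ gen) l = x}

/-- the `A`-orbit of a vertex `ϑ` inside a monochromatic component `C` -/
def AOrbit (C : Set Γ.E) (ϑ : Γ.V) : Set Γ.V :=
  {v | ∃ l, (∀ e ∈ l, e ∈ C) ∧ Γ.IsPathFrom ϑ v l ∧ Γ.pathVal (genG φ gen) l ∈ Asub φ}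

/-- `Γ` is `X_i^±`-saturated at `v` -/
def SaturatedAt (i : Fin 2) (v : Γ.V) : Prop :=
  ∀ (x : X i) (b : Bool), ∃ e : Γ.E, Γ.ini e = v ∧ Γ.lab e = (⟨i, x⟩, b)

/-- a (connected) precover of `G = G₁ ∗_A G₂` : a well-labelled `G`-based graph all of whose
monochromatic components are covers of the corresponding free factor -/
def IsPrecover : Prop :=
  Γ.WellLabeled ∧ Γ.Connected ∧ Γ.IsGBased (genG φ gen) ∧
    ∀ i C, IsMonoComponent Γ i C → ∀ v ∈ VSet Γ C, SaturatedAt Γ i v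

/-- a redundant monochromatic component of a pointed precover -/
def Redundant (v₀ : Γ.V) (i : Fin 2) (C : Set Γ.E) : Prop :=
  IsMonoComponent Γ i C ∧
    (((∀ j D, IsMonoComponent Γ j D → D = C) ∧ LabSetIn φ gen Γ C v₀ = {1}) ∨
      ((∃ j D, IsMonoComponent Γ j D ∧ D ≠ C) ∧
        (∀ ϑ ∈ VB Γ C, LabSetIn φ gen Γ C ϑ ⊆ (Asub φ : Set (PushoutI φ)) ∧
          VB Γ C = AOrbit φ gen Γ C ϑ) ∧
        (v₀ ∉ VSet Γ C ∨ (v₀ ∈ VB Γ C ∧ LabSetIn φ gen Γ C v₀ = {1}))))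

/-- a reduced precover -/
def IsReducedPrecover (v₀ : Γ.V) : Prop :=
  IsPrecover φ gen Γ ∧ (∀ i C, ¬ Redundant φ gen Γ v₀ i C) ∧
    ∀ i C, IsMonoComponent Γ i C → v₀ ∈ VSet Γ C →
      LabSetIn φ gen Γ C v₀ ∩ (Asub φ : Set (PushoutI φ)) ≠ {1} →
      ∃ j D, j ≠ i ∧ IsMonoComponent Γ j D ∧ v₀ ∈ VSet Γ D ∧
        LabSetIn φ gen Γ D v₀ ∩ (Asub φ : Set (PushoutI φ)) =
          LabSetIn φ gen Γ C v₀ ∩ (Asub φ : Set (PushoutI φ))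

/-- a decomposition into monochromatic blocks witnessing a word in normal form:
each block is nonempty and monochromatic, consecutive blocks have different colors,
each syllable is nontrivial, and if there is more than one syllable then no syllable
lies in (the image of) `A` -/
def NormalParts (parts : List (Fin 2 × List (Alpha X × Bool))) : Prop :=
  parts ≠ [] ∧
    (∀ p ∈ parts, p.2 ≠ [] ∧ ∀ a ∈ p.2, a.1.1 = p.1) ∧
    parts.Chain' (fun p q => p.1 ≠ q.1) ∧
    (∀ p ∈ parts, wordVal (genG φ gen) p.2 ≠ 1) ∧
    (parts.length ≠ 1 → ∀ p ∈ parts, wordVal (genG φ gen) p.2 ∉ Asub φ)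

/-- a word over `X^±` is in normal form -/
def IsNormalWord (w : List (Alpha X × Bool)) : Prop :=
  ∃ parts, NormalParts φ gen parts ∧ w = (parts.map Prod.snd).flatten

/-- a normal path from `v` to `w` : a path whose label is a word in normal form -/
def IsNormalPathFrom (v w : Γ.V) (l : List Γ.E) : Prop :=
  Γ.IsPathFrom v w l ∧ IsNormalWord φ gen (Γ.word l)

/-- the relative Cayley graph `Cayley(G, H)` of the amalgam -/
def cayleyGraph (H : Subgroup (PushoutI φ)) : LabeledGraph (Alpha X) :=
  relCayley H (id : Alpha X → Alpha X) (genG φ gen)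

/-- the basepoint `H · 1` of `Cayley(G, H)` -/
def cayleyBase (H : Subgroup (PushoutI φ)) : (cayleyGraph φ gen H).V :=
  Quotient.mk (QuotientGroup.rightRel H) 1

/-- an essential vertex of `Cayley(G, H)` : one through which a normal path closed at the
basepoint passes -/
def Essential (H : Subgroup (PushoutI φ)) (v : (cayleyGraph φ gen H).V) : Prop :=
  ∃ l, IsNormalPathFrom φ gen (cayleyGraph φ gen H) (cayleyBase φ gen H) (cayleyBase φ gen H) l ∧
    (cayleyGraph φ gen H).PassesThrough l v

/-- the vertices of the normal core: the basepoint together with the essential vertices -/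
def CoreV (H : Subgroup (PushoutI φ)) (v : (cayleyGraph φ gen H).V) : Prop :=
  v = cayleyBase φ gen H ∨ Essential φ gen H v

/-- the normal core of `Cayley(G, H)` : the restriction of `Cayley(G, H)` to the
essential vertices -/
def normalCore (H : Subgroup (PushoutI φ)) : LabeledGraph (Alpha X) where
  V := {v : (cayleyGraph φ gen H).V // CoreV φ gen H v}
  E := {e : (cayleyGraph φ gen H).E //
        CoreV φ gen H ((cayleyGraph φ gen H).ini e) ∧ CoreV φ gen H ((cayleyGraph φ gen H).ter e)}
  bar e := ⟨(cayleyGraph φ gen H).bar e.1, by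
    refine ⟨e.2.2, ?_⟩
    have : (cayleyGraph φ gen H).ter ((cayleyGraph φ gen H).bar e.1) = (cayleyGraph φ gen H).ini e.1 := by
      rw [LabeledGraph.ter, (cayleyGraph φ gen H).bar_bar]
    rw [this]
    exact e.2.1⟩
  ini e := ⟨(cayleyGraph φ gen H).ini e.1, e.2.1⟩
  lab e := (cayleyGraph φ gen H).lab e.1
  bar_bar e := Subtype.ext ((cayleyGraph φ gen H).bar_bar e.1)
  bar_ne e h := (cayleyGraph φ gen H).bar_ne e.1 (congrArg Subtype.val h)
  lab_bar e := (cayleyGraph φ gen H).lab_bar e.1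

/-- the basepoint of the normal core -/
def coreBase (H : Subgroup (PushoutI φ)) : (normalCore φ gen H).V :=
  ⟨cayleyBase φ gen H, Or.inl rfl⟩

/-- the relative Cayley graph of a free factor `G_j` with respect to a subgroup `L ≤ G_j`,
viewed as a graph labelled with `X^±` (using only letters of color `j`) -/
def cayleyFactor (j : Fin 2) (L : Subgroup (Gi j)) : LabeledGraph (Alpha X) :=
  relCayley L (fun x : X j => (⟨j, x⟩ : Alpha X)) (gen j)

/-- the diameter of the factor group `G_i` : the length of a longest geodesic in its
Cayley graph, i.e. the least `n` such that every element is a product of at most `n`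
generators and inverses -/
noncomputable def groupDiam (i : Fin 2) : ℕ :=
  sInf {n | ∀ h : Gi i, ∃ w : List (X i × Bool), wordVal (gen i) w = h ∧ w.length ≤ n}

end Amalgam

section CayleyAux

variable {G : Type} [Group G] (H : Subgroup G) {Y : Type} (val : Y → G)

lemma cosMul_one' (v) : cosMul H (1 : G) v = v := by
  induction v using Quotient.inductionOn with
  | h a => simp [cosMul]

lemma cosMul_mul' (a b : G) (v) :
    cosMul H b (cosMul H a v) = cosMul H (a * b) v := by
  induction v using Quotient.inductionOn with
  | h x => simp [cosMul, mul_assoc]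

lemma wordVal_cons' {Xa : Type} (g : Xa → G) (p : Xa × Bool) (w' : List (Xa × Bool)) :
    wordVal g (p :: w') = (if p.2 then g p.1 else (g p.1)⁻¹) * wordVal g w' := by
  simp [wordVal]

/-- the step value of a letter -/
def stepVal (a : Y × Bool) : G := if a.2 then val a.1 else (val a.1)⁻¹

lemma relCayley_ter (e : (relCayley H (id : Y → Y) val).E) :
    (relCayley H (id : Y → Y) val).ter e = cosMul H (stepVal val e.2) e.1 := rfl

lemma relCayley_path_end :
    ∀ (l : List ((relCayley H (id : Y → Y) val).E)) (v w),
      (relCayley H (id : Y → Y) val).IsPathFrom v w l →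
      cosMul H ((relCayley H (id : Y → Y) val).pathVal val l) v = w
  | [], v, w, h => by
      simp only [LabeledGraph.pathVal, LabeledGraph.word, List.map_nil, wordVal,
        List.prod_nil]
      refine (cosMul_one' H v).trans ?_
      exact h
  | e :: l, v, w, h => by
      obtain ⟨h1, h2⟩ := h
      have ih := relCayley_path_end l _ w h2
      rw [relCayley_ter] at ih
      simp only [LabeledGraph.pathVal, LabeledGraph.word, List.map_cons] at ih ⊢
      rw [wordVal_cons']; subst h1
      exact (cosMul_mul' H _ _ _).symm.trans ih

/-- the canonical path in a relative Cayley graph starting at `v` and reading `w` -/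
def mkPath (v : (relCayley H (id : Y → Y) val).V) :
    List (Y × Bool) → List ((relCayley H (id : Y → Y) val).E)
  | [] => []
  | a :: w => (v, a) :: mkPath (cosMul H (stepVal val a) v) w

lemma mkPath_word (v : (relCayley H (id : Y → Y) val).V) (w : List (Y × Bool)) :
    (relCayley H (id : Y → Y) val).word (mkPath H val v w) = w := by
  induction w generalizing v with
  | nil => rfl
  | cons a w ih =>
      simp only [mkPath, LabeledGraph.word, List.map_cons]
      show a :: List.map (relCayley H (id : Y → Y) val).lab _ = a :: w
      exact congrArg (a :: ·) (ih _)

lemma mkPath_isPathFrom (w : List (Y × Bool)) :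
    ∀ (v : (relCayley H (id : Y → Y) val).V),
      (relCayley H (id : Y → Y) val).IsPathFrom v (cosMul H (wordVal val w) v)
        (mkPath H val v w) := by
  induction w with
  | nil =>
      intro v
      show v = _
      rw [show wordVal val ([] : List (Y × Bool)) = 1 from rfl]; exact (cosMul_one' H v).symm
  | cons a w ih =>
      intro v
      refine ⟨rfl, ?_⟩
      show (relCayley H (id : Y → Y) val).IsPathFrom (cosMul H (stepVal val a) v) _ _
      have := ih (cosMul H (stepVal val a) v)
      rw [show cosMul H (wordVal val w) (cosMul H (stepVal val a) v) =
        cosMul H (stepVal val a * wordVal val w) v from cosMul_mul' H _ _ v] at this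
      rw [wordVal_cons']
      exact this

end CayleyAux

section CoreAux

variable {Xa : Type} {Γ : LabeledGraph Xa} {P : Γ.V → Prop}

/-- the restriction of a labelled graph to vertices satisfying `P` (generic form of
the normal core construction) -/
private def restrict (Γ : LabeledGraph Xa) (P : Γ.V → Prop) : LabeledGraph Xa where
  V := {v : Γ.V // P v}
  E := {e : Γ.E // P (Γ.ini e) ∧ P (Γ.ter e)}
  bar e := ⟨Γ.bar e.1, by
    refine ⟨e.2.2, ?_⟩
    have : Γ.ter (Γ.bar e.1) = Γ.ini e.1 := by rw [LabeledGraph.ter, Γ.bar_bar]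
    rw [this]; exact e.2.1⟩
  ini e := ⟨Γ.ini e.1, e.2.1⟩
  lab e := Γ.lab e.1
  bar_bar e := Subtype.ext (Γ.bar_bar e.1)
  bar_ne e h := Γ.bar_ne e.1 (congrArg Subtype.val h)
  lab_bar e := Γ.lab_bar e.1

open Amalgam in
lemma normalCore_eq_restrict {X : Fin 2 → Type} {Gi : Fin 2 → Type} [∀ i, Group (Gi i)]
    {A : Type} [Group A] (φ : ∀ i, A →* Gi i) (gen : ∀ i, X i → Gi i)
    (H : Subgroup (PushoutI φ)) :
    normalCore φ gen H = restrict (cayleyGraph φ gen H) (CoreV φ gen H) := rfl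

lemma restrict_path_up :
    ∀ (l : List (restrict Γ P).E) (v w : (restrict Γ P).V),
      (restrict Γ P).IsPathFrom v w l →
      Γ.IsPathFrom v.1 w.1 (l.map Subtype.val) ∧ Γ.word (l.map Subtype.val) =
        (restrict Γ P).word l
  | [], v, w, h => ⟨congrArg Subtype.val h, rfl⟩
  | e :: l, v, w, h => by
      obtain ⟨h1, h2⟩ := h
      have ih := restrict_path_up l _ w h2
      refine ⟨⟨congrArg Subtype.val h1, ?_⟩, ?_⟩
      · exact ih.1
      · show Γ.lab e.1 :: Γ.word (l.map Subtype.val) =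
          Γ.lab e.1 :: (restrict Γ P).word l
        exact congrArg _ ih.2

lemma restrict_path_down :
    ∀ (l : List Γ.E) (v w : Γ.V) (hv : P v) (hw : P w),
      Γ.IsPathFrom v w l → (∀ e ∈ l, P (Γ.ini e) ∧ P (Γ.ter e)) →
      ∃ l' : List (restrict Γ P).E,
        (restrict Γ P).IsPathFrom ⟨v, hv⟩ ⟨w, hw⟩ l' ∧
          (restrict Γ P).word l' = Γ.word l
  | [], v, w, hv, hw, h, _ => ⟨[], Subtype.ext h, rfl⟩
  | e :: l, v, w, hv, hw, h, hall => by
      obtain ⟨h1, h2⟩ := h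
      have he := hall e List.mem_cons_self
      obtain ⟨l', hl', hword⟩ := restrict_path_down l (Γ.ter e) w he.2 hw h2
        (fun f hf => hall f (List.mem_cons_of_mem e hf))
      refine ⟨⟨e, he⟩ :: l', ⟨Subtype.ext h1, ?_⟩, ?_⟩
      · have hter : (restrict Γ P).ter ⟨e, he⟩ = ⟨Γ.ter e, he.2⟩ := Subtype.ext rfl
        rw [hter]
        exact hl'
      · simp only [LabeledGraph.word, List.map_cons]
        exact congrArg (Γ.lab e :: ·) (by simpa [LabeledGraph.word] using hword)

end CoreAux

open Amalgam in
/-- For a finitely generated subgroup `H` of an amalgam of finite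
groups, a word `w` in normal form represents an element of `H` if and only if it labels
a path in the normal core of `Cayley(G, H)` closed at the basepoint. -/
theorem stmt_7
    {X : Fin 2 → Type} {Gi : Fin 2 → Type} [∀ i, Group (Gi i)] [∀ i, Finite (X i)]
    [∀ i, Finite (Gi i)]
    {A : Type} [Group A] (φ : ∀ i, A →* Gi i) (gen : ∀ i, X i → Gi i)
    (hφ : ∀ i, Function.Injective (φ i))
    (hgen : ∀ i, Subgroup.closure (Set.range (gen i)) = ⊤)
    (H : Subgroup (PushoutI φ)) (hH : H.FG)
    (w : List (Alpha X × Bool)) (hw : IsNormalWord φ gen w) :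
    wordVal (genG φ gen) w ∈ H ↔
      ∃ l, (normalCore φ gen H).IsPathFrom (coreBase φ gen H) (coreBase φ gen H) l ∧
        (normalCore φ gen H).word l = w := by
  classical
  set g : PushoutI φ := wordVal (genG φ gen) w with hg
  constructor
  · intro hmem
    have hbase : cosMul H g (cayleyBase φ gen H) = cayleyBase φ gen H := by
      show Quotient.mk (QuotientGroup.rightRel H) (1 * g) =
        Quotient.mk (QuotientGroup.rightRel H) 1
      exact Quotient.sound (QuotientGroup.rightRel_apply.2 (by simpa using inv_mem hmem))
    set l₀ := mkPath H (genG φ gen) (cayleyBase φ gen H) w with hl₀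
    have hpath : (cayleyGraph φ gen H).IsPathFrom (cayleyBase φ gen H)
        (cayleyBase φ gen H) l₀ := by
      have := mkPath_isPathFrom H (genG φ gen) w (cayleyBase φ gen H)
      rwa [← hg, hbase] at this
    have hword : (cayleyGraph φ gen H).word l₀ = w :=
      mkPath_word H (genG φ gen) (cayleyBase φ gen H) w
    have hnorm : IsNormalPathFrom φ gen (cayleyGraph φ gen H)
        (cayleyBase φ gen H) (cayleyBase φ gen H) l₀ :=
      ⟨hpath, by rw [hword]; exact hw⟩
    have hall : ∀ e ∈ l₀, CoreV φ gen H ((cayleyGraph φ gen H).ini e) ∧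
        CoreV φ gen H ((cayleyGraph φ gen H).ter e) := fun e he =>
      ⟨Or.inr ⟨l₀, hnorm, ⟨e, he, Or.inl rfl⟩⟩,
       Or.inr ⟨l₀, hnorm, ⟨e, he, Or.inr rfl⟩⟩⟩
    obtain ⟨l', hl', hw'⟩ := restrict_path_down (P := CoreV φ gen H) l₀
      (cayleyBase φ gen H) (cayleyBase φ gen H) (Or.inl rfl) (Or.inl rfl) hpath hall
    exact ⟨l', hl', hw'.trans hword⟩
  · rintro ⟨l, hl, hword⟩
    obtain ⟨hpath, hw2⟩ := restrict_path_up (P := CoreV φ gen H) l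
      (coreBase φ gen H) (coreBase φ gen H) hl
    have hend := relCayley_path_end H (genG φ gen) (l.map Subtype.val)
      (cayleyBase φ gen H) (cayleyBase φ gen H) hpath
    have hword' : (restrict (cayleyGraph φ gen H) (CoreV φ gen H)).word l = w := hword
    have hval : (relCayley H (id : Alpha X → Alpha X) (genG φ gen)).pathVal (genG φ gen)
        (l.map Subtype.val) = g := by
      show wordVal (genG φ gen) ((cayleyGraph φ gen H).word (l.map Subtype.val)) = g
      rw [hw2, hword']
    rw [hval] at hend
    have hmk : Quotient.mk (QuotientGroup.rightRel H) (1 * g) =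
        Quotient.mk (QuotientGroup.rightRel H) 1 := hend
    have := QuotientGroup.rightRel_apply.1 (Quotient.exact hmk)
    simpa using this
end

section
/- Let G = gp⟨X|R⟩ be a finitely presented group, let (Γ, v₀) be a pointed graph well-labelled with X^±, and let p be a freely reduced path in Γ with lab(p) = 1 in G and ι(p) ≠ τ(p). Let Γ' be the graph obtained from Γ by identifying the endpoints ι(p) and τ(p) of p. Then Lab(Γ, v₀) = Lab(Γ', v₀'), where v₀' is the vertex of Γ' corresponding to v₀. -/
open Monoid

namespace LabeledGraph

variable {X G : Type} [Group G] (g : X → G) (Γ : LabeledGraph X)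

lemma pathVal_append (l₁ l₂ : List Γ.E) :
    Γ.pathVal g (l₁ ++ l₂) = Γ.pathVal g l₁ * Γ.pathVal g l₂ := by
  simp [pathVal, word, wordVal]

lemma isPathFrom_append {u v w : Γ.V} {l₁ l₂ : List Γ.E} (h₁ : Γ.IsPathFrom u v l₁)
    (h₂ : Γ.IsPathFrom v w l₂) : Γ.IsPathFrom u w (l₁ ++ l₂) := by
  induction l₁ generalizing u with
  | nil => cases h₁; exact h₂
  | cons e l ih => exact ⟨h₁.1, ih h₁.2⟩

/-- inverse path -/
def rev (l : List Γ.E) : List Γ.E := (l.map Γ.bar).reverse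

lemma isPathFrom_rev {u v : Γ.V} {l : List Γ.E} (h : Γ.IsPathFrom u v l) :
    Γ.IsPathFrom v u (Γ.rev l) := by
  induction l generalizing u with
  | nil => cases h; exact rfl
  | cons e l ih =>
    obtain ⟨h1, h2⟩ := h
    have : Γ.rev (e :: l) = Γ.rev l ++ [Γ.bar e] := by simp [rev]
    rw [this]
    refine Γ.isPathFrom_append (ih h2) ?_
    exact ⟨rfl, by simp [IsPathFrom, ter, Γ.bar_bar, h1]⟩

lemma pathVal_single (e : Γ.E) :
    Γ.pathVal g [e] = if (Γ.lab e).2 then g (Γ.lab e).1 else (g (Γ.lab e).1)⁻¹ := by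
  simp [pathVal, word, wordVal]

lemma pathVal_rev (l : List Γ.E) : Γ.pathVal g (Γ.rev l) = (Γ.pathVal g l)⁻¹ := by
  induction l with
  | nil => simp [rev, pathVal, word, wordVal]
  | cons e l ih =>
    have h1 : Γ.rev (e :: l) = Γ.rev l ++ [Γ.bar e] := by simp [rev]
    have h2 : (e :: l) = [e] ++ l := rfl
    rw [h1, h2, Γ.pathVal_append, Γ.pathVal_append, ih, mul_inv_rev]
    congr 1
    rw [Γ.pathVal_single, Γ.pathVal_single, Γ.lab_bar]
    cases (Γ.lab e).2 <;> simp

end LabeledGraph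

lemma graphHom_map_ter {X : Type} {Γ Δ : LabeledGraph X} (π : GraphHom Γ Δ) (e : Γ.E) :
    Δ.ter (π.fE e) = π.fV (Γ.ter e) := by
  rw [LabeledGraph.ter, π.map_bar, π.map_ini]; rfl

lemma graphHom_pathVal {X G : Type} [Group G] (g : X → G) {Γ Δ : LabeledGraph X}
    (π : GraphHom Γ Δ) (l : List Γ.E) :
    Δ.pathVal g (l.map π.fE) = Γ.pathVal g l := by
  simp only [LabeledGraph.pathVal, LabeledGraph.word, wordVal, List.map_map]
  congr 1
  exact List.map_congr_left fun e _ => by simp [Function.comp, π.map_lab]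

lemma graphHom_isPathFrom {X : Type} {Γ Δ : LabeledGraph X} (π : GraphHom Γ Δ)
    {u v : Γ.V} {l : List Γ.E} (h : Γ.IsPathFrom u v l) :
    Δ.IsPathFrom (π.fV u) (π.fV v) (l.map π.fE) := by
  induction l generalizing u with
  | nil => cases h; exact rfl
  | cons e l ih =>
    refine ⟨by rw [π.map_ini, h.1], ?_⟩
    rw [graphHom_map_ter]
    exact ih h.2

/-- For a finitely presented group `G = gp⟨X|R⟩` and a well-labelled
pointed graph `(Γ, v₀)`, identifying the distinct endpoints of a freely reduced path
whose label is trivial in `G` does not change the subgroup `Lab(Γ, v₀)`. -/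
theorem stmt_10
    {X G : Type} [Group G] [Finite X] (ge : X → G)
    (hgen : Subgroup.closure (Set.range ge) = ⊤)
    (Γ Γ' : LabeledGraph X) (v₀ : Γ.V) (v₀' : Γ'.V)
    (hwl : Γ.WellLabeled) (v₁ v₂ : Γ.V) (p : List Γ.E)
    (hp : Γ.IsPathFrom v₁ v₂ p) (hfr : Γ.FreelyReduced p) (hne : v₁ ≠ v₂)
    (hval : Γ.pathVal ge p = 1)
    (hid : IsEndpointIdentification Γ Γ' v₁ v₂ v₀ v₀') :
    Γ.LabSet ge v₀ = Γ'.LabSet ge v₀' := by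
  obtain ⟨π, hsurjV, hbijE, hbase, h12, hvert⟩ := hid
  have pvnil : Γ.pathVal ge ([] : List Γ.E) = 1 := rfl
  have connect : ∀ u v : Γ.V, π.fV u = π.fV v →
      ∃ q, Γ.IsPathFrom u v q ∧ Γ.pathVal ge q = 1 := by
    intro u v huv
    rcases hvert u v huv with h | h
    · exact ⟨[], h, pvnil⟩
    · have hu : u = v₁ ∨ u = v₂ := by
        have : u ∈ ({v₁, v₂} : Set Γ.V) := h ▸ Set.mem_insert u {v}
        simpa using this
      have hv : v = v₁ ∨ v = v₂ := by
        have : v ∈ ({v₁, v₂} : Set Γ.V) := h ▸ Set.mem_insert_of_mem u rfl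
        simpa using this
      rcases hu with rfl | rfl <;> rcases hv with h' | h' <;> rw [h']
      · exact ⟨[], rfl, pvnil⟩
      · exact ⟨p, hp, hval⟩
      · exact ⟨Γ.rev p, Γ.isPathFrom_rev hp, by rw [Γ.pathVal_rev, hval]; simp⟩
      · exact ⟨[], rfl, pvnil⟩
  have lift : ∀ (l' : List Γ'.E) (a b : Γ'.V), Γ'.IsPathFrom a b l' →
      ∀ u v : Γ.V, π.fV u = a → π.fV v = b →
      ∃ l, Γ.IsPathFrom u v l ∧ Γ.pathVal ge l = Γ'.pathVal ge l' := by
    intro l'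
    induction l' with
    | nil =>
      intro a b hab u v hu hv
      obtain ⟨q, hq, hq1⟩ := connect u v (by rw [hu, hv]; exact hab)
      exact ⟨q, hq, by rw [hq1]; rfl⟩
    | cons e' l' ih =>
      intro a b hab u v hu hv
      obtain ⟨h1, h2⟩ := hab
      obtain ⟨e, rfl⟩ := hbijE.2 e'
      obtain ⟨q, hq, hq1⟩ := connect u (Γ.ini e) (by rw [hu, ← h1, π.map_ini])
      obtain ⟨l, hl, hl1⟩ := ih (Γ'.ter (π.fE e)) b h2 (Γ.ter e) v
        (graphHom_map_ter π e).symm hv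
      refine ⟨q ++ e :: l, Γ.isPathFrom_append hq ⟨rfl, hl⟩, ?_⟩
      have h3 : (q ++ e :: l) = q ++ ([e] ++ l) := rfl
      have h4 : (π.fE e :: l') = [π.fE e] ++ l' := rfl
      rw [h3, h4, Γ.pathVal_append, Γ.pathVal_append, Γ'.pathVal_append, hq1, one_mul, hl1]
      congr 1
      rw [Γ.pathVal_single, Γ'.pathVal_single, π.map_lab]
  ext x
  constructor
  · rintro ⟨l, hl, rfl⟩
    exact ⟨l.map π.fE, by rw [← hbase]; exact graphHom_isPathFrom π hl,
      graphHom_pathVal ge π l⟩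
  · rintro ⟨l', hl', rfl⟩
    obtain ⟨l, hl, hv⟩ := lift l' v₀' v₀' hl' v₀ v₀ hbase hbase
    exact ⟨l, hl, hv⟩
end

section
/- Let Γ be a precover of the amalgam G = G₁ ∗_A G₂, and let p be a path in Γ from v₁ to v₂ with lab(p) ≡ w. Then for each word w' in normal form of syllable length greater than 1 with w' = w in G, there exists a normal path p' in Γ from v₁ to v₂ with lab(p') ≡ w'. -/
open Monoid

namespace Stallings13

open Monoid Amalgam LabeledGraph List

/-! ### Generic word lemmas -/

section Words

variable {Xx G : Type} [Group G] (g : Xx → G)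

theorem wordVal_nil : wordVal g [] = 1 := rfl

theorem wordVal_append (w₁ w₂ : List (Xx × Bool)) :
    wordVal g (w₁ ++ w₂) = wordVal g w₁ * wordVal g w₂ := by
  simp [wordVal]

/-- the formal inverse of a word -/
def invWord (w : List (Xx × Bool)) : List (Xx × Bool) :=
  (w.map fun p => (p.1, !p.2)).reverse

theorem wordVal_invWord (w : List (Xx × Bool)) :
    wordVal g (invWord w) = (wordVal g w)⁻¹ := by
  induction w with
  | nil => simp [invWord, wordVal]
  | cons p w ih =>
      have h1 : invWord (p :: w) = invWord w ++ [(p.1, !p.2)] := by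
        simp [invWord]
      rw [h1, wordVal_append, ih]
      have h2 : wordVal g (p :: w) = (if p.2 then g p.1 else (g p.1)⁻¹) * wordVal g w := by
        simp [wordVal]
      have h3 : wordVal g [(p.1, !p.2)] = (if p.2 then g p.1 else (g p.1)⁻¹)⁻¹ := by
        cases hb : p.2 <;> simp [wordVal]
      rw [h2, h3, mul_inv_rev]

end Words

/-! ### Generic path lemmas -/

section Paths

variable {Xx : Type} {Γ : LabeledGraph Xx}

theorem isPathFrom_append {l₁ l₂ : List Γ.E} {v u w : Γ.V}
    (h₁ : Γ.IsPathFrom v u l₁) (h₂ : Γ.IsPathFrom u w l₂) :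
    Γ.IsPathFrom v w (l₁ ++ l₂) := by
  induction l₁ generalizing v with
  | nil => cases h₁; exact h₂
  | cons e l ih => exact ⟨h₁.1, ih h₁.2⟩

theorem word_append (l₁ l₂ : List Γ.E) :
    Γ.word (l₁ ++ l₂) = Γ.word l₁ ++ Γ.word l₂ := by
  simp [LabeledGraph.word]

variable {G : Type} [Group G] (g : Xx → G)

theorem pathVal_eq_wordVal (l : List Γ.E) : Γ.pathVal g l = wordVal g (Γ.word l) := rfl

theorem pathVal_append (l₁ l₂ : List Γ.E) :
    Γ.pathVal g (l₁ ++ l₂) = Γ.pathVal g l₁ * Γ.pathVal g l₂ := by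
  rw [pathVal_eq_wordVal, word_append, wordVal_append]; rfl

theorem word_reverseBar (l : List Γ.E) :
    Γ.word ((l.map Γ.bar).reverse) = invWord (Γ.word l) := by
  simp only [LabeledGraph.word, invWord, List.map_reverse, List.map_map]
  congr 1
  apply List.map_congr_left
  intro e _
  exact Γ.lab_bar e

theorem isPathFrom_reverse {l : List Γ.E} {v w : Γ.V} (h : Γ.IsPathFrom v w l) :
    Γ.IsPathFrom w v ((l.map Γ.bar).reverse) := by
  induction l generalizing v with
  | nil => cases h; exact rfl
  | cons e l ih =>
      have h1 : ((e :: l).map Γ.bar).reverse = (l.map Γ.bar).reverse ++ [Γ.bar e] := by simp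
      rw [h1]
      refine isPathFrom_append (ih h.2) ⟨rfl, ?_⟩
      show Γ.ter (Γ.bar e) = v
      rw [LabeledGraph.ter, Γ.bar_bar, h.1]

theorem pathVal_reverseBar (l : List Γ.E) :
    Γ.pathVal g ((l.map Γ.bar).reverse) = (Γ.pathVal g l)⁻¹ := by
  rw [pathVal_eq_wordVal, word_reverseBar, wordVal_invWord]; rfl

/-- in a `G`-based graph, the endpoint of a path is determined by its value -/
theorem endpoint_unique (hGB : Γ.IsGBased g) {v w₁ w₂ : Γ.V} {l₁ l₂ : List Γ.E}
    (h₁ : Γ.IsPathFrom v w₁ l₁) (h₂ : Γ.IsPathFrom v w₂ l₂)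
    (hval : Γ.pathVal g l₁ = Γ.pathVal g l₂) : w₁ = w₂ := by
  refine hGB w₁ w₂ ((l₁.map Γ.bar).reverse ++ l₂)
    (isPathFrom_append (isPathFrom_reverse h₁) h₂) ?_
  rw [pathVal_append, pathVal_reverseBar, hval, inv_mul_cancel]

theorem exists_last_ter {l : List Γ.E} {v w : Γ.V} (h : Γ.IsPathFrom v w l) (hne : l ≠ []) :
    ∃ e ∈ l, Γ.ter e = w := by
  induction l generalizing v with
  | nil => exact absurd rfl hne
  | cons e l ih =>
      rcases l with _ | ⟨e', l'⟩
      · exact ⟨e, List.mem_cons_self, h.2⟩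
      · obtain ⟨f, hf, hfw⟩ := ih h.2 (by simp)
        exact ⟨f, List.mem_cons_of_mem _ hf, hfw⟩

end Paths

end Stallings13
namespace Stallings13

section Amal

open Monoid Amalgam LabeledGraph List

variable {X : Fin 2 → Type} {Gi : Fin 2 → Type} [∀ i, Group (Gi i)]
  {A : Type} [Group A] {φ : ∀ i, A →* Gi i} {gen : ∀ i, X i → Gi i}
  {Γ : LabeledGraph (Alpha X)}

theorem colorE_bar (e : Γ.E) : colorE Γ (Γ.bar e) = colorE Γ e := by
  simp [colorE, Γ.lab_bar]

/-- every vertex at which an edge of color `i` begins is `X_i^±`-saturated -/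
theorem sat_of_edge (hpre : IsPrecover φ gen Γ) (e : Γ.E) :
    SaturatedAt Γ (colorE Γ e) (Γ.ini e) := by
  refine hpre.2.2.2 (colorE Γ e) (monoComponent Γ e) ⟨e, rfl, rfl⟩ (Γ.ini e) ⟨e, ⟨rfl, ?_⟩, rfl⟩
  exact Relation.ReflTransGen.refl

/-- from a saturated vertex, any word of the corresponding color can be read -/
theorem readMono (hpre : IsPrecover φ gen Γ) (i : Fin 2) :
    ∀ (u : List (Alpha X × Bool)), (∀ p ∈ u, p.1.1 = i) →
    ∀ v : Γ.V, SaturatedAt Γ i v →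
    ∃ (l : List Γ.E) (t : Γ.V), Γ.IsPathFrom v t l ∧ Γ.word l = u ∧
      ∀ e ∈ l, colorE Γ e = i := by
  intro u
  induction u with
  | nil => intro _ v _; exact ⟨[], v, rfl, rfl, by simp⟩
  | cons p u ih =>
      intro hcol v hsat
      obtain ⟨⟨ai, ax⟩, b⟩ := p
      have hai : ai = i := hcol _ (List.mem_cons_self)
      subst hai
      obtain ⟨e, he, hle⟩ := hsat ax b
      have hce : colorE Γ e = ai := by simp [colorE, hle]
      have hsat' : SaturatedAt Γ ai (Γ.ter e) := by
        have := sat_of_edge hpre (Γ.bar e)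
        rwa [colorE_bar, hce] at this
      obtain ⟨l, t, hl, hw, hcl⟩ := ih (fun q hq => hcol q (List.mem_cons_of_mem _ hq)) _ hsat'
      refine ⟨e :: l, t, ⟨he, hl⟩, ?_, ?_⟩
      · simp [LabeledGraph.word, hle] at hw ⊢; exact hw
      · intro f hf
        rcases List.mem_cons.1 hf with rfl | hf
        · exact hce
        · exact hcl f hf

/-- the value of a word all of whose letters have color `i` lies in the image of `G_i` -/
theorem colorVal_mem (i : Fin 2) (u : List (Alpha X × Bool)) (hcol : ∀ p ∈ u, p.1.1 = i) :
    wordVal (genG φ gen) u ∈ (PushoutI.of (φ := φ) i).range := by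
  induction u with
  | nil => exact one_mem _
  | cons p u ih =>
      have h2 : wordVal (genG φ gen) (p :: u) =
          (if p.2 then genG φ gen p.1 else (genG φ gen p.1)⁻¹) * wordVal (genG φ gen) u := by
        simp [wordVal]
      rw [h2]
      refine mul_mem ?_ (ih fun q hq => hcol q (List.mem_cons_of_mem _ hq))
      obtain ⟨⟨ai, ax⟩, b⟩ := p
      have hai : ai = i := hcol _ (List.mem_cons_self)
      subst hai
      have : genG φ gen (⟨ai, ax⟩ : Alpha X) ∈ (PushoutI.of (φ := φ) ai).range :=
        ⟨gen ai ax, rfl⟩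
      cases b <;> simp [genG]

/-- any element of `G_i` is the value of a word of color `i` -/
theorem exists_word_of (hgen : ∀ i, Subgroup.closure (Set.range (gen i)) = ⊤) (i : Fin 2)
    (h : Gi i) : ∃ u : List (Alpha X × Bool), (∀ p ∈ u, p.1.1 = i) ∧
      wordVal (genG φ gen) u = PushoutI.of (φ := φ) i h := by
  have hmem : h ∈ Subgroup.closure (Set.range (gen i)) := by rw [hgen i]; trivial
  induction hmem using Subgroup.closure_induction with
  | mem x hx =>
      obtain ⟨y, rfl⟩ := hx
      exact ⟨[(⟨i, y⟩, true)], by simp, by simp [wordVal, genG]⟩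
  | one => exact ⟨[], by simp, by simp [wordVal]⟩
  | mul x y _ _ ihx ihy =>
      obtain ⟨u₁, hc₁, hv₁⟩ := ihx
      obtain ⟨u₂, hc₂, hv₂⟩ := ihy
      refine ⟨u₁ ++ u₂, ?_, ?_⟩
      · intro p hp; rcases List.mem_append.1 hp with h | h
        · exact hc₁ p h
        · exact hc₂ p h
      · rw [wordVal_append, hv₁, hv₂, map_mul]
  | inv x _ ihx =>
      obtain ⟨u₁, hc₁, hv₁⟩ := ihx
      refine ⟨invWord u₁, ?_, ?_⟩
      · intro p hp
        simp only [invWord, List.mem_reverse, List.mem_map] at hp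
        obtain ⟨q, hq, rfl⟩ := hp
        exact hc₁ q hq
      · rw [wordVal_invWord, hv₁, map_inv]

end Amal

end Stallings13
namespace Stallings13

section Amal2

open Monoid Amalgam LabeledGraph List

variable {X : Fin 2 → Type} {Gi : Fin 2 → Type} [∀ i, Group (Gi i)]
  {A : Type} [Group A] {φ : ∀ i, A →* Gi i} {gen : ∀ i, X i → Gi i}
  {Γ : LabeledGraph (Alpha X)}

theorem Asub_le_of_range (d : Fin 2) : Asub φ ≤ (PushoutI.of (φ := φ) d).range := by
  rintro x ⟨a, rfl⟩
  exact ⟨φ d a, PushoutI.of_apply_eq_base φ d a⟩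

/-- **A-jump**: if there is a path from `ϑ` to `β` whose value lies in `A`, and `β` is
saturated at color `d`, then there is a monochromatic path of color `d` from `ϑ` to `β`
with the same value. -/
theorem Ajump (hgen : ∀ i, Subgroup.closure (Set.range (gen i)) = ⊤)
    (hpre : IsPrecover φ gen Γ) {ϑ β : Γ.V} {q : List Γ.E} {d : Fin 2}
    (hq : Γ.IsPathFrom ϑ β q) (ha : Γ.pathVal (genG φ gen) q ∈ Asub φ)
    (hsat : SaturatedAt Γ d β) :
    ∃ t : List Γ.E, Γ.IsPathFrom ϑ β t ∧
      Γ.pathVal (genG φ gen) t = Γ.pathVal (genG φ gen) q ∧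
      ∀ e ∈ t, colorE Γ e = d := by
  obtain ⟨g, hg⟩ := Asub_le_of_range (φ := φ) d ha
  obtain ⟨u, hcol, hval⟩ := exists_word_of (φ := φ) hgen d g
  have hvala : wordVal (genG φ gen) u = Γ.pathVal (genG φ gen) q := by rw [hval, hg]
  have hcol' : ∀ p ∈ invWord u, p.1.1 = d := by
    intro p hp
    simp only [invWord, List.mem_reverse, List.mem_map] at hp
    obtain ⟨r, hr, rfl⟩ := hp
    exact hcol r hr
  obtain ⟨s, γ, hs, hws, hcs⟩ := readMono hpre d (invWord u) hcol' β hsat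
  have hvs : Γ.pathVal (genG φ gen) s = (Γ.pathVal (genG φ gen) q)⁻¹ := by
    rw [pathVal_eq_wordVal, hws, wordVal_invWord, hvala]
  have hγ : ϑ = γ := by
    refine hpre.2.2.1 ϑ γ (q ++ s) (isPathFrom_append hq hs) ?_
    rw [pathVal_append, hvs, mul_inv_cancel]
  refine ⟨(s.map Γ.bar).reverse, ?_, ?_, ?_⟩
  · rw [hγ]; exact isPathFrom_reverse hs
  · rw [pathVal_reverseBar, hvs, inv_inv]
  · intro e he
    simp only [List.mem_reverse, List.mem_map] at he
    obtain ⟨f, hf, rfl⟩ := he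
    rw [colorE_bar]; exact hcs f hf

/-- a chained system of nonempty monochromatic pieces -/
def PiecesFrom (Γ : LabeledGraph (Alpha X)) : Γ.V → List (Fin 2 × List Γ.E) → Γ.V → Prop
  | v, [], w => v = w
  | v, p :: qs, w => p.2 ≠ [] ∧ (∀ e ∈ p.2, colorE Γ e = p.1) ∧
      ∃ u, Γ.IsPathFrom v u p.2 ∧ PiecesFrom Γ u qs w

/-- colors of consecutive pieces differ -/
def AltPieces (qs : List (Fin 2 × List Γ.E)) : Prop := qs.Chain' fun p r => p.1 ≠ r.1

/-- the value of a piece system -/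
def pcsVal (φ : ∀ i, A →* Gi i) (gen : ∀ i, X i → Gi i) (Γ : LabeledGraph (Alpha X))
    (qs : List (Fin 2 × List Γ.E)) : PushoutI φ :=
  (qs.map fun p => Γ.pathVal (genG φ gen) p.2).prod

theorem pcsVal_nil : pcsVal φ gen Γ [] = 1 := by simp [pcsVal]

theorem pcsVal_cons (p : Fin 2 × List Γ.E) (qs : List (Fin 2 × List Γ.E)) :
    pcsVal φ gen Γ (p :: qs) = Γ.pathVal (genG φ gen) p.2 * pcsVal φ gen Γ qs := by
  simp [pcsVal]

theorem piecesFrom_path {v w : Γ.V} {qs : List (Fin 2 × List Γ.E)}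
    (h : PiecesFrom Γ v qs w) :
    ∃ l : List Γ.E, Γ.IsPathFrom v w l ∧ Γ.pathVal (genG φ gen) l = pcsVal φ gen Γ qs := by
  induction qs generalizing v with
  | nil => cases h; exact ⟨[], rfl, rfl⟩
  | cons p qs ih =>
      obtain ⟨_, _, u, hu, hrest⟩ := h
      obtain ⟨l, hl, hv⟩ := ih hrest
      exact ⟨p.2 ++ l, isPathFrom_append hu hl, by rw [pathVal_append, hv, pcsVal_cons]⟩

/-- decomposition of a path into maximal monochromatic pieces -/
theorem exists_pieces {v w : Γ.V} {l : List Γ.E} (h : Γ.IsPathFrom v w l) :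
    ∃ qs, PiecesFrom Γ v qs w ∧ AltPieces qs ∧
      pcsVal φ gen Γ qs = Γ.pathVal (genG φ gen) l := by
  induction l generalizing v with
  | nil => exact ⟨[], h, List.isChain_nil, rfl⟩
  | cons e l ih =>
      obtain ⟨he, hrest⟩ := h
      obtain ⟨qs, hqs, halt, hval⟩ := ih hrest
      have hvcons : Γ.pathVal (genG φ gen) (e :: l) =
          Γ.pathVal (genG φ gen) [e] * Γ.pathVal (genG φ gen) l := by
        rw [← pathVal_append]; rfl
      rcases qs with _ | ⟨p, qs'⟩
      · refine ⟨[(colorE Γ e, [e])], ⟨by simp, by simp, Γ.ter e, ⟨he, rfl⟩, hqs⟩, ?_, ?_⟩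
        · exact List.isChain_singleton _
        · rw [hvcons, ← hval]; simp [pcsVal]
      · obtain ⟨hpne, hpcol, u, hu, hrest'⟩ := hqs
        by_cases hc : p.1 = colorE Γ e
        · refine ⟨(p.1, e :: p.2) :: qs', ⟨by simp, ?_, u, ⟨he, hu⟩, hrest'⟩, ?_, ?_⟩
          · intro f hf
            rcases List.mem_cons.1 hf with rfl | hf
            · exact hc.symm
            · exact hpcol f hf
          · exact List.isChain_cons.2 ⟨(List.isChain_cons.1 halt).1, (List.isChain_cons.1 halt).2⟩
          · rw [hvcons, pcsVal_cons] at *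
            rw [← hval, ← mul_assoc]
            congr 1
            rw [← pathVal_append]; rfl
        · refine ⟨(colorE Γ e, [e]) :: (p :: qs'),
            ⟨by simp, by simp, Γ.ter e, ⟨he, rfl⟩, hpne, hpcol, u, hu, hrest'⟩, ?_, ?_⟩
          · exact List.isChain_cons_cons.2 ⟨fun hh => hc hh.symm, halt⟩
          · rw [hvcons, pcsVal_cons, hval]

end Amal2

end Stallings13
namespace Stallings13

section NF

open Monoid Amalgam List

variable {Gi : Fin 2 → Type} [∀ i, Group (Gi i)]
  {A : Type} [Group A] {φ : ∀ i, A →* Gi i}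

/-- a reduced sequence of syllables -/
def RedSeq (φ : ∀ i, A →* Gi i) (L : List ((i : Fin 2) × Gi i)) : Prop :=
  (∀ p ∈ L, p.2 ∉ (φ p.1).range) ∧ L.Chain' fun p r => p.1 ≠ r.1

/-- the product of a sequence of syllables in the amalgam -/
def seqProd (φ : ∀ i, A →* Gi i) (L : List ((i : Fin 2) × Gi i)) : PushoutI φ :=
  (L.map fun p => PushoutI.of (φ := φ) p.1 p.2).prod

/-- **Normal form theorem**: the product of a nonempty reduced sequence does not lie in
the amalgamated subgroup. -/
theorem RedSeq.prod_not_mem (hφ : ∀ i, Function.Injective (φ i))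
    {L : List ((i : Fin 2) × Gi i)} (hL : RedSeq φ L) (hne : L ≠ []) :
    seqProd φ L ∉ Asub φ := by
  intro hmem
  have hone : ∀ p ∈ L, p.2 ≠ 1 := by
    intro p hp h1
    exact hL.1 p hp ⟨1, by simp [h1]⟩
  set w : Monoid.CoprodI.Word Gi := ⟨L, hone, hL.2⟩ with hw
  have hred : PushoutI.Reduced φ w := fun p hp => hL.1 p hp
  have hprod : PushoutI.ofCoprodI (φ := φ) w.prod = seqProd φ L := by
    show PushoutI.ofCoprodI (φ := φ)
        (List.prod (L.map fun p => Monoid.CoprodI.of p.snd)) = _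
    rw [map_list_prod, seqProd, List.map_map]
    congr 1
  have := hred.eq_empty_of_mem_range hφ (by rw [hprod]; exact hmem)
  have : w.toList = [] := by rw [this]; rfl
  exact hne this

/-- the inverse of a reduced sequence -/
theorem RedSeq.inv (hφ : ∀ i, Function.Injective (φ i)) {L : List ((i : Fin 2) × Gi i)}
    (hL : RedSeq φ L) :
    RedSeq φ (L.reverse.map fun p => ⟨p.1, p.2⁻¹⟩) ∧
      seqProd φ (L.reverse.map fun p => ⟨p.1, p.2⁻¹⟩) = (seqProd φ L)⁻¹ := by
  constructor
  · constructor
    · intro p hp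
      simp only [List.mem_map, List.mem_reverse] at hp
      obtain ⟨r, hr, rfl⟩ := hp
      simpa using hL.1 r hr
    · show List.IsChain _ _; rw [List.isChain_map, List.isChain_reverse]
      exact hL.2.imp fun a b h => Ne.symm h
  · have haux : seqProd φ (L.reverse.map fun p => (⟨p.1, p.2⁻¹⟩ : (i : Fin 2) × Gi i)) =
        (L.reverse.map fun p => (PushoutI.of (φ := φ) p.1 p.2)⁻¹).prod := by
      rw [seqProd, List.map_map]
      congr 1
    rw [haux, seqProd, List.prod_inv_reverse, List.map_reverse, List.map_map]
    rfl

/-- `FC c h` : `h` has a normal form whose first syllable has color `c` -/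
def FC (φ : ∀ i, A →* Gi i) (c : Fin 2) (h : PushoutI φ) : Prop :=
  ∃ L : List ((i : Fin 2) × Gi i), RedSeq φ L ∧ L ≠ [] ∧
    (L.head?.map Sigma.fst) = some c ∧ seqProd φ L = h

theorem FC.not_mem_asub (hφ : ∀ i, Function.Injective (φ i)) {c : Fin 2} {h : PushoutI φ}
    (hfc : FC φ c h) : h ∉ Asub φ := by
  obtain ⟨L, hL, hne, _, rfl⟩ := hfc
  exact hL.prod_not_mem hφ hne

theorem seqProd_append (L₁ L₂ : List ((i : Fin 2) × Gi i)) :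
    seqProd φ (L₁ ++ L₂) = seqProd φ L₁ * seqProd φ L₂ := by
  simp [seqProd]

/-- uniqueness of the color of the first syllable of a normal form -/
theorem FC.unique (hφ : ∀ i, Function.Injective (φ i)) {c c' : Fin 2} {h : PushoutI φ}
    (h₁ : FC φ c h) (h₂ : FC φ c' h) : c = c' := by
  by_contra hcc
  obtain ⟨L₁, hL₁, hne₁, hhd₁, hp₁⟩ := h₁
  obtain ⟨L₂, hL₂, hne₂, hhd₂, hp₂⟩ := h₂
  obtain ⟨hI, hIp⟩ := hL₁.inv hφ
  set M := (L₁.reverse.map fun p => (⟨p.1, p.2⁻¹⟩ : (i : Fin 2) × Gi i)) ++ L₂ with hM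
  have hMne : M ≠ [] := by
    simp only [hM]
    intro hx
    rcases List.append_eq_nil_iff.1 hx with ⟨_, h2⟩
    exact hne₂ h2
  have hMred : RedSeq φ M := by
    constructor
    · intro p hp
      rcases List.mem_append.1 hp with hp | hp
      · exact hI.1 p hp
      · exact hL₂.1 p hp
    · show List.IsChain _ _; rw [List.isChain_append]
      refine ⟨hI.2, hL₂.2, ?_⟩
      intro x hx y hy
      -- x is the last of the reversed inverse of L₁, i.e. has color c; y has color c'
      have hx1 : x.1 = c := by
        rw [List.getLast?_map, List.getLast?_reverse] at hx
        cases hh : L₁.head? with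
        | none => rw [hh] at hx; simp at hx
        | some p =>
            rw [hh] at hx
            simp only [Option.map_some, Option.mem_def, Option.some.injEq] at hx
            rw [hh] at hhd₁
            simp only [Option.map_some, Option.some.injEq] at hhd₁
            rw [← hx]
            exact hhd₁
      have hy1 : y.1 = c' := by
        cases hh : L₂.head? with
        | none => rw [hh] at hy; simp at hy
        | some p =>
            rw [hh] at hy
            simp only [Option.mem_def, Option.some.injEq] at hy
            rw [hh] at hhd₂
            simp only [Option.map_some, Option.some.injEq] at hhd₂
            rw [← hy]
            exact hhd₂
      rw [hx1, hy1]
      exact hcc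
  have hMval : seqProd φ M = 1 := by
    rw [hM, seqProd_append, hIp, hp₁, hp₂, inv_mul_cancel]
  exact hMred.prod_not_mem hφ hMne (by rw [hMval]; exact one_mem _)

end NF

end Stallings13
namespace Stallings13

section Kplus

open Monoid Amalgam LabeledGraph List

variable {X : Fin 2 → Type} {Gi : Fin 2 → Type} [∀ i, Group (Gi i)]
  {A : Type} [Group A] {φ : ∀ i, A →* Gi i} {gen : ∀ i, X i → Gi i}
  {Γ : LabeledGraph (Alpha X)}

theorem sat_ter (hpre : IsPrecover φ gen Γ) {e : Γ.E} {i : Fin 2} (hc : colorE Γ e = i) :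
    SaturatedAt Γ i (Γ.ter e) := by
  have := sat_of_edge hpre (Γ.bar e)
  rwa [colorE_bar, hc] at this

theorem sat_last (hpre : IsPrecover φ gen Γ) {v β : Γ.V} {q : List Γ.E} {i : Fin 2}
    (hq : Γ.IsPathFrom v β q) (hne : q ≠ []) (hcol : ∀ e ∈ q, colorE Γ e = i) :
    SaturatedAt Γ i β := by
  obtain ⟨e, he, hter⟩ := exists_last_ter hq hne
  have := sat_ter hpre (hcol e he)
  rwa [hter] at this

theorem pcsVal_cons' (c : Fin 2) (s : List Γ.E) (qs : List (Fin 2 × List Γ.E)) :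
    pcsVal φ gen Γ ((c, s) :: qs) = Γ.pathVal (genG φ gen) s * pcsVal φ gen Γ qs :=
  pcsVal_cons _ _

/-- variant of `Ajump` with saturation at the initial vertex -/
theorem Ajump' (hgen : ∀ i, Subgroup.closure (Set.range (gen i)) = ⊤)
    (hpre : IsPrecover φ gen Γ) {ϑ β : Γ.V} {q : List Γ.E} {d : Fin 2}
    (hq : Γ.IsPathFrom ϑ β q) (ha : Γ.pathVal (genG φ gen) q ∈ Asub φ)
    (hsat : SaturatedAt Γ d ϑ) :
    ∃ t : List Γ.E, Γ.IsPathFrom ϑ β t ∧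
      Γ.pathVal (genG φ gen) t = Γ.pathVal (genG φ gen) q ∧
      ∀ e ∈ t, colorE Γ e = d := by
  obtain ⟨t', ht'path, ht'val, ht'col⟩ := Ajump hgen hpre (isPathFrom_reverse hq)
    (by rw [pathVal_reverseBar]; exact inv_mem ha) hsat
  refine ⟨(t'.map Γ.bar).reverse, isPathFrom_reverse ht'path, ?_, ?_⟩
  · rw [pathVal_reverseBar, ht'val, pathVal_reverseBar, inv_inv]
  · intro e he
    simp only [List.mem_reverse, List.mem_map] at he
    obtain ⟨f, hf, rfl⟩ := he
    rw [colorE_bar]; exact ht'col f hf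

/-- **Key lemma**: every piece system can be replaced (keeping endpoints and value) by one
all of whose pieces have values outside of `A`, unless its total value lies in `A`. -/
theorem Kplus (hgen : ∀ i, Subgroup.closure (Set.range (gen i)) = ⊤)
    (hpre : IsPrecover φ gen Γ) :
    ∀ (m : ℕ) (qs : List (Fin 2 × List Γ.E)) (ϑ w : Γ.V), qs.length ≤ m →
    PiecesFrom Γ ϑ qs w → AltPieces qs →
    pcsVal φ gen Γ qs ∈ Asub φ ∨
      ∃ qs', PiecesFrom Γ ϑ qs' w ∧ AltPieces qs' ∧
        pcsVal φ gen Γ qs' = pcsVal φ gen Γ qs ∧ qs'.length ≤ qs.length ∧ qs' ≠ [] ∧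
        ∀ p ∈ qs', Γ.pathVal (genG φ gen) p.2 ∉ Asub φ := by
  intro m
  induction m with
  | zero =>
      intro qs ϑ w hlen hP _
      rw [Nat.le_zero, List.length_eq_zero_iff] at hlen
      subst hlen
      left; rw [pcsVal_nil]; exact one_mem _
  | succ m IH =>
      rintro (_ | ⟨⟨c₁, q₁⟩, rest⟩) ϑ w hlen hP hA
      · left; rw [pcsVal_nil]; exact one_mem _
      obtain ⟨hq₁ne, hq₁col, β, hq₁path, hrest⟩ := hP
      have hrlen : rest.length ≤ m := by simpa using hlen
      have halt' : AltPieces rest := (List.isChain_cons.1 hA).2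
      have hsatβ : SaturatedAt Γ c₁ β := sat_last hpre hq₁path hq₁ne hq₁col
      rcases IH rest β w hrlen hrest halt' with hr | ⟨qs'', hP'', hA'', hV'', hlen'', hne'', hred''⟩
      · -- the rest has value in A : merge it into the first piece
        by_cases htot : Γ.pathVal (genG φ gen) q₁ * pcsVal φ gen Γ rest ∈ Asub φ
        · left; rw [pcsVal_cons]; exact htot
        · right
          obtain ⟨pr, hprpath, hprval⟩ := piecesFrom_path (φ := φ) (gen := gen) hrest
          obtain ⟨t, htpath, htval, htcol⟩ := Ajump' hgen hpre hprpath (by rw [hprval]; exact hr) hsatβ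
          refine ⟨[(c₁, q₁ ++ t)], ⟨?_, ?_, w, isPathFrom_append hq₁path htpath, rfl⟩,
            List.isChain_singleton _, ?_, ?_, by simp, ?_⟩
          · simp [hq₁ne]
          · intro e he
            rcases List.mem_append.1 he with he | he
            · exact hq₁col e he
            · exact htcol e he
          · rw [pcsVal_cons' c₁ (q₁ ++ t), pcsVal_nil, mul_one, pathVal_append, htval, hprval,
              pcsVal_cons' c₁ q₁]
          · simp
          · intro p hp
            rcases List.mem_singleton.1 hp with rfl
            show Γ.pathVal (genG φ gen) (q₁ ++ t) ∉ Asub φ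
            rw [pathVal_append, htval, hprval]
            exact htot
      · -- the rest is realized by a system of pieces with values outside A
        rcases qs'' with _ | ⟨⟨d₁, s₁⟩, tail⟩
        · exact absurd rfl hne''
        obtain ⟨hs₁ne, hs₁col, γ, hs₁path, htail⟩ := hP''
        have hg₁ : Γ.pathVal (genG φ gen) s₁ ∉ Asub φ := hred'' _ (List.mem_cons_self)
        have hsatd₁ : SaturatedAt Γ d₁ β := by
          obtain ⟨f, hfl⟩ := List.exists_mem_of_ne_nil s₁ hs₁ne
          rcases s₁ with _ | ⟨f₀, s₁'⟩
          · exact absurd rfl hs₁ne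
          · have hini : Γ.ini f₀ = β := hs₁path.1
            have := sat_of_edge hpre f₀
            rwa [hs₁col f₀ (List.mem_cons_self), hini] at this
        by_cases hcd : d₁ = c₁
        · -- merge the first piece with the head of the realization; recurse
          subst hcd
          have hmerge : PiecesFrom Γ ϑ ((d₁, q₁ ++ s₁) :: tail) w := by
            refine ⟨by simp [hq₁ne], ?_, γ, isPathFrom_append hq₁path hs₁path, htail⟩
            intro e he
            rcases List.mem_append.1 he with he | he
            · exact hq₁col e he
            · exact hs₁col e he
          have hmalt : AltPieces ((d₁, q₁ ++ s₁) :: tail) :=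
            List.isChain_cons.2 ⟨(List.isChain_cons.1 hA'').1, (List.isChain_cons.1 hA'').2⟩
          have hmval : pcsVal φ gen Γ ((d₁, q₁ ++ s₁) :: tail) =
              pcsVal φ gen Γ ((d₁, q₁) :: rest) := by
            rw [pcsVal_cons' d₁ (q₁ ++ s₁), pathVal_append, mul_assoc, ← pcsVal_cons' d₁ s₁,
              hV'', pcsVal_cons' d₁ q₁]
          have hmlen : ((d₁, q₁ ++ s₁) :: tail).length ≤ m := by
            have : ((d₁, s₁) :: tail).length ≤ rest.length := hlen''
            simp only [List.length_cons] at this ⊢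
            omega
          rcases IH _ ϑ w hmlen hmerge hmalt with hl | ⟨qs₃, h1, h2, h3, h4, h5, h6⟩
          · left; rw [← hmval]; exact hl
          · right
            refine ⟨qs₃, h1, h2, by rw [h3, hmval], ?_, h5, h6⟩
            have : ((d₁, s₁) :: tail).length ≤ rest.length := hlen''
            simp only [List.length_cons] at h4 this ⊢
            omega
        · -- colors differ
          by_cases hh₁ : Γ.pathVal (genG φ gen) q₁ ∈ Asub φ
          · -- jump over the first piece into color d₁
            right
            obtain ⟨t, htpath, htval, htcol⟩ := Ajump hgen hpre hq₁path hh₁ hsatd₁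
            refine ⟨(d₁, t ++ s₁) :: tail, ⟨by simp [hs₁ne], ?_, γ,
              isPathFrom_append htpath hs₁path, htail⟩, ?_, ?_, ?_, by simp, ?_⟩
            · intro e he
              rcases List.mem_append.1 he with he | he
              · exact htcol e he
              · exact hs₁col e he
            · exact List.isChain_cons.2 ⟨(List.isChain_cons.1 hA'').1, (List.isChain_cons.1 hA'').2⟩
            · rw [pcsVal_cons' d₁ (t ++ s₁), pathVal_append, htval, mul_assoc,
                ← pcsVal_cons' d₁ s₁, hV'', pcsVal_cons' c₁ q₁]
            · have : ((d₁, s₁) :: tail).length ≤ rest.length := hlen''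
              simp only [List.length_cons] at this ⊢
              omega
            · intro p hp
              rcases List.mem_cons.1 hp with rfl | hp
              · show Γ.pathVal (genG φ gen) (t ++ s₁) ∉ Asub φ
                rw [pathVal_append, htval]
                intro hmem
                exact hg₁ (by
                  have : Γ.pathVal (genG φ gen) s₁ =
                      (Γ.pathVal (genG φ gen) q₁)⁻¹ *
                        (Γ.pathVal (genG φ gen) q₁ * Γ.pathVal (genG φ gen) s₁) := by group
                  rw [this]
                  exact mul_mem (inv_mem hh₁) hmem)
              · exact hred'' p (List.mem_cons_of_mem _ hp)
          · -- simply prepend the first piece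
            right
            refine ⟨(c₁, q₁) :: (d₁, s₁) :: tail,
              ⟨hq₁ne, hq₁col, β, hq₁path, hs₁ne, hs₁col, γ, hs₁path, htail⟩, ?_, ?_, ?_,
              by simp, ?_⟩
            · refine List.isChain_cons_cons.2 ⟨fun h => hcd h.symm, hA''⟩
            · rw [pcsVal_cons' c₁ q₁, hV'', pcsVal_cons' c₁ q₁]
            · simp only [List.length_cons]
              have : ((d₁, s₁) :: tail).length ≤ rest.length := hlen''
              simp only [List.length_cons] at this
              omega
            · intro p hp
              rcases List.mem_cons.1 hp with rfl | hp
              · exact hh₁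
              · exact hred'' p hp

end Kplus

end Stallings13
namespace Stallings13

section SatC

open Monoid Amalgam LabeledGraph List

variable {X : Fin 2 → Type} {Gi : Fin 2 → Type} [∀ i, Group (Gi i)]
  {A : Type} [Group A] {φ : ∀ i, A →* Gi i} {gen : ∀ i, X i → Gi i}
  {Γ : LabeledGraph (Alpha X)}

theorem seqProd_cons (p : (i : Fin 2) × Gi i) (L : List ((i : Fin 2) × Gi i)) :
    seqProd φ (p :: L) = PushoutI.of (φ := φ) p.1 p.2 * seqProd φ L := by
  simp [seqProd]

theorem piecesFrom_colors {v w : Γ.V} {qs : List (Fin 2 × List Γ.E)}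
    (h : PiecesFrom Γ v qs w) : ∀ p ∈ qs, ∀ e ∈ p.2, colorE Γ e = p.1 := by
  induction qs generalizing v with
  | nil => simp
  | cons p qs ih =>
      obtain ⟨_, hcol, u, _, hrest⟩ := h
      intro r hr
      rcases List.mem_cons.1 hr with rfl | hr
      · exact hcol
      · exact ih hrest r hr

theorem pathVal_mem_of_range {i : Fin 2} {s : List Γ.E} (hcol : ∀ e ∈ s, colorE Γ e = i) :
    Γ.pathVal (genG φ gen) s ∈ (PushoutI.of (φ := φ) i).range := by
  rw [pathVal_eq_wordVal]
  refine colorVal_mem i (Γ.word s) ?_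
  intro p hp
  obtain ⟨e, he, rfl⟩ := List.mem_map.1 hp
  exact hcol e he

theorem exists_redSeq_of_pieces :
    ∀ (qs : List (Fin 2 × List Γ.E)), (∀ p ∈ qs, ∀ e ∈ p.2, colorE Γ e = p.1) →
    (∀ p ∈ qs, Γ.pathVal (genG φ gen) p.2 ∉ Asub φ) →
    ∃ L : List ((i : Fin 2) × Gi i), (∀ pp ∈ L, pp.2 ∉ (φ pp.1).range) ∧
      L.map Sigma.fst = qs.map Prod.fst ∧ seqProd φ L = pcsVal φ gen Γ qs := by
  intro qs
  induction qs with
  | nil => intro _ _; exact ⟨[], by simp, by simp, by simp [seqProd, pcsVal]⟩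
  | cons p qs ih =>
      intro hcol hnA
      obtain ⟨c, s⟩ := p
      obtain ⟨g, hg⟩ := pathVal_mem_of_range (φ := φ) (gen := gen) (hcol (c, s) (List.mem_cons_self))
      obtain ⟨L, hLmem, hLmap, hLprod⟩ := ih (fun r hr => hcol r (List.mem_cons_of_mem _ hr))
        (fun r hr => hnA r (List.mem_cons_of_mem _ hr))
      refine ⟨⟨c, g⟩ :: L, ?_, by simp [hLmap], ?_⟩
      · intro pp hpp
        rcases List.mem_cons.1 hpp with rfl | hpp
        · rintro ⟨a, ha⟩
          refine hnA (c, s) (List.mem_cons_self) ⟨a, ?_⟩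
          have ha' : φ c a = g := ha
          rw [← PushoutI.of_apply_eq_base φ c a, ha']
          exact hg
        · exact hLmem pp hpp
      · rw [seqProd_cons, hLprod, pcsVal_cons' c s, hg]

/-- **Claim**: if some path from `ϑ` has a value whose normal form starts with a syllable of
color `c`, then `ϑ` is `X_c^±`-saturated. -/
theorem satC (hφ : ∀ i, Function.Injective (φ i))
    (hgen : ∀ i, Subgroup.closure (Set.range (gen i)) = ⊤)
    (hpre : IsPrecover φ gen Γ) {ϑ z : Γ.V} {q : List Γ.E} {c : Fin 2}
    (hq : Γ.IsPathFrom ϑ z q) (hfc : FC φ c (Γ.pathVal (genG φ gen) q)) :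
    SaturatedAt Γ c ϑ := by
  obtain ⟨qs, hP, hA, hval⟩ := exists_pieces (φ := φ) (gen := gen) hq
  rcases Kplus hgen hpre qs.length qs ϑ z le_rfl hP hA with
    hl | ⟨qs', hP', hA', hV', _, hne', hred'⟩
  · exact absurd (hval ▸ hl) (hfc.not_mem_asub hφ)
  · obtain ⟨L, hLmem, hLmap, hLprod⟩ :=
      exists_redSeq_of_pieces qs' (piecesFrom_colors hP') hred'
    have hLch : L.Chain' fun p r => p.1 ≠ r.1 := by
      have h1 : (qs'.map Prod.fst).Chain' Ne := (List.isChain_map Prod.fst).2 hA'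
      rw [← hLmap] at h1
      exact (List.isChain_map Sigma.fst).1 h1
    rcases qs' with _ | ⟨⟨d, s⟩, tail⟩
    · exact absurd rfl hne'
    have hLne : L ≠ [] := by
      intro h; rw [h] at hLmap; simp at hLmap
    have hhead : L.head?.map Sigma.fst = some d := by
      rw [← List.head?_map, hLmap]; simp
    have hFC : FC φ d (Γ.pathVal (genG φ gen) q) :=
      ⟨L, ⟨hLmem, hLch⟩, hLne, hhead, by rw [hLprod, hV', hval]⟩
    have hcd : c = d := hfc.unique hφ hFC
    obtain ⟨hsne, hscol, γ, hspath, -⟩ := hP'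
    rcases s with _ | ⟨f, s'⟩
    · exact absurd rfl hsne
    have hini : Γ.ini f = ϑ := hspath.1
    have := sat_of_edge hpre f
    rwa [hscol f (List.mem_cons_self), hini, ← hcd] at this

end SatC

end Stallings13
namespace Stallings13

section Final

open Monoid Amalgam LabeledGraph List

variable {X : Fin 2 → Type} {Gi : Fin 2 → Type} [∀ i, Group (Gi i)]
  {A : Type} [Group A] {φ : ∀ i, A →* Gi i} {gen : ∀ i, X i → Gi i}
  {Γ : LabeledGraph (Alpha X)}

theorem wordVal_flatten {Xx G : Type} [Group G] (g : Xx → G)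
    (ws : List (List (Xx × Bool))) :
    wordVal g ws.flatten = (ws.map (wordVal g)).prod := by
  induction ws with
  | nil => simp [wordVal]
  | cons w ws ih => rw [List.flatten_cons, wordVal_append, ih, List.map_cons, List.prod_cons]

theorem exists_redSeq_of_parts :
    ∀ (ps : List (Fin 2 × List (Alpha X × Bool))),
    (∀ p ∈ ps, ∀ a ∈ p.2, a.1.1 = p.1) →
    (∀ p ∈ ps, wordVal (genG φ gen) p.2 ∉ Asub φ) →
    ∃ L : List ((i : Fin 2) × Gi i), (∀ pp ∈ L, pp.2 ∉ (φ pp.1).range) ∧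
      L.map Sigma.fst = ps.map Prod.fst ∧
      seqProd φ L = wordVal (genG φ gen) ((ps.map Prod.snd).flatten) := by
  intro ps
  induction ps with
  | nil => intro _ _; exact ⟨[], by simp, by simp, by simp [seqProd, wordVal]⟩
  | cons p ps ih =>
      intro hcol hnA
      obtain ⟨c, u⟩ := p
      obtain ⟨g, hg⟩ := colorVal_mem (φ := φ) (gen := gen) c u
        (hcol (c, u) (List.mem_cons_self))
      obtain ⟨L, hLmem, hLmap, hLprod⟩ := ih (fun r hr => hcol r (List.mem_cons_of_mem _ hr))
        (fun r hr => hnA r (List.mem_cons_of_mem _ hr))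
      refine ⟨⟨c, g⟩ :: L, ?_, by simp [hLmap], ?_⟩
      · intro pp hpp
        rcases List.mem_cons.1 hpp with rfl | hpp
        · rintro ⟨a, ha⟩
          refine hnA (c, u) (List.mem_cons_self) ⟨a, ?_⟩
          have ha' : φ c a = g := ha
          rw [← PushoutI.of_apply_eq_base φ c a, ha']
          exact hg
        · exact hLmem pp hpp
      · rw [seqProd_cons, hLprod]
        show PushoutI.of (φ := φ) c g * _ = _
        rw [hg, List.map_cons, List.flatten_cons, wordVal_append]

/-- the main reading lemma : reading a reduced sequence of syllable words along the graph -/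
theorem mainClaim (hφ : ∀ i, Function.Injective (φ i))
    (hgen : ∀ i, Subgroup.closure (Set.range (gen i)) = ⊤)
    (hpre : IsPrecover φ gen Γ) (v₂ : Γ.V) :
    ∀ (ps : List (Fin 2 × List (Alpha X × Bool))),
    (∀ p ∈ ps, ∀ a ∈ p.2, a.1.1 = p.1) →
    ps.Chain' (fun p r => p.1 ≠ r.1) →
    (∀ p ∈ ps, wordVal (genG φ gen) p.2 ∉ Asub φ) →
    ∀ (v : Γ.V) (q : List Γ.E), Γ.IsPathFrom v v₂ q →
    Γ.pathVal (genG φ gen) q = wordVal (genG φ gen) ((ps.map Prod.snd).flatten) →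
    ∃ l', Γ.IsPathFrom v v₂ l' ∧ Γ.word l' = (ps.map Prod.snd).flatten := by
  intro ps
  induction ps with
  | nil =>
      intro _ _ _ v q hq hval
      have hv : v = v₂ := hpre.2.2.1 v v₂ q hq (by rw [hval]; simp [wordVal])
      exact ⟨[], hv, rfl⟩
  | cons p ps ih =>
      intro hcol hchain hnA v q hq hval
      obtain ⟨c, u⟩ := p
      -- the value of `q` has a normal form starting with color `c`
      obtain ⟨L, hLmem, hLmap, hLprod⟩ := exists_redSeq_of_parts ((c, u) :: ps) hcol hnA
      have hLch : L.Chain' fun p r => p.1 ≠ r.1 := by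
        have h1 : (((c, u) :: ps).map Prod.fst).Chain' Ne := (List.isChain_map Prod.fst).2 hchain
        rw [← hLmap] at h1
        exact (List.isChain_map Sigma.fst).1 h1
      have hLne : L ≠ [] := by intro h; rw [h] at hLmap; simp at hLmap
      have hhead : L.head?.map Sigma.fst = some c := by
        rw [← List.head?_map, hLmap]; simp
      have hFC : FC φ c (Γ.pathVal (genG φ gen) q) :=
        ⟨L, ⟨hLmem, hLch⟩, hLne, hhead, by rw [hLprod, hval]⟩
      have hsat : SaturatedAt Γ c v := satC hφ hgen hpre hq hFC
      -- read the first syllable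
      obtain ⟨l₁, t, hl₁path, hl₁word, _⟩ :=
        readMono hpre c u (hcol (c, u) (List.mem_cons_self)) v hsat
      have hl₁val : Γ.pathVal (genG φ gen) l₁ = wordVal (genG φ gen) u := by
        rw [pathVal_eq_wordVal, hl₁word]
      -- the remaining path
      have hq₂ : Γ.IsPathFrom t v₂ ((l₁.map Γ.bar).reverse ++ q) :=
        isPathFrom_append (isPathFrom_reverse hl₁path) hq
      have hval₂ : Γ.pathVal (genG φ gen) ((l₁.map Γ.bar).reverse ++ q) =
          wordVal (genG φ gen) ((ps.map Prod.snd).flatten) := by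
        rw [pathVal_append, pathVal_reverseBar, hl₁val, hval]
        have : ((((c, u) :: ps).map Prod.snd).flatten) = u ++ (ps.map Prod.snd).flatten := by
          simp
        rw [this, wordVal_append]
        group
      obtain ⟨l₂, hl₂path, hl₂word⟩ := ih (fun r hr => hcol r (List.mem_cons_of_mem _ hr))
        (List.isChain_cons.1 hchain).2 (fun r hr => hnA r (List.mem_cons_of_mem _ hr))
        t _ hq₂ hval₂
      refine ⟨l₁ ++ l₂, isPathFrom_append hl₁path hl₂path, ?_⟩
      rw [word_append, hl₁word, hl₂word]
      simp

end Final

end Stallings13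
open Amalgam in
/-- In a precover `Γ` of the amalgam `G = G₁ ∗_A G₂`, if a path `l`
runs from `v₁` to `v₂`, then for every word `w'` in normal form of syllable length
greater than one representing the same element of `G` as the label of `l`, there is a
(normal) path from `v₁` to `v₂` labelled exactly by `w'`. -/
theorem stmt_13
    {X : Fin 2 → Type} {Gi : Fin 2 → Type} [∀ i, Group (Gi i)] [∀ i, Finite (X i)]
    {A : Type} [Group A] (φ : ∀ i, A →* Gi i) (gen : ∀ i, X i → Gi i)
    (hφ : ∀ i, Function.Injective (φ i))
    (hgen : ∀ i, Subgroup.closure (Set.range (gen i)) = ⊤)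
    (Γ : LabeledGraph (Alpha X)) (hpre : IsPrecover φ gen Γ)
    (v₁ v₂ : Γ.V) (l : List Γ.E) (hl : Γ.IsPathFrom v₁ v₂ l)
    (w' : List (Alpha X × Bool)) (parts : List (Fin 2 × List (Alpha X × Bool)))
    (hparts : NormalParts φ gen parts) (hw' : w' = (parts.map Prod.snd).flatten)
    (hlen : 1 < parts.length)
    (hval : wordVal (genG φ gen) w' = Γ.pathVal (genG φ gen) l) :
    ∃ l', IsNormalPathFrom φ gen Γ v₁ v₂ l' ∧ Γ.word l' = w' := by
  obtain ⟨hpne, hpcond, hpchain, hpone, hpA⟩ := hparts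
  have hnA : ∀ p ∈ parts, wordVal (genG φ gen) p.2 ∉ Asub φ := hpA (by omega)
  have hcol : ∀ p ∈ parts, ∀ a ∈ p.2, a.1.1 = p.1 := fun p hp => (hpcond p hp).2
  obtain ⟨l', hl'path, hl'word⟩ := Stallings13.mainClaim hφ hgen hpre v₂ parts hcol hpchain hnA
    v₁ l hl (by rw [← hw', hval])
  refine ⟨l', ⟨hl'path, parts, ⟨hpne, hpcond, hpchain, hpone, hpA⟩, by rw [hl'word]⟩, ?_⟩
  rw [hl'word, hw']
end
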